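/- arXiv:2501.14609 — 2 statements merged into one kernel-verified Lean document; each statement's English description precedes it below -/
import Mathlib

section
/- Let m ≥ 1, let Λ > 0, and let v be a real-valued function on subsets of {1, …, m} with marginal values at most Λ, i.e., |v(S ∪ {g}) − v(S)| ≤ Λ for every S ⊆ {1, …, m} and every g ∈ {1, …, m}. Let V be the multilinear extension of v. Then V is Λ-Lipschitz on [0,1]^m with respect to the ℓ1 norm: for all x, y ∈ [0,1]^m, |V(y) − V(x)| ≤ Λ · Σ_{j=1}^m |y_j − x_j|. -/
/-!
Fixing every coordinate but `x j`, the multilinear extension is affine in `x j`, and its slope is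
an average of the marginals `v (insert j T) - v T` with the nonnegative weights
`(∏ i ∈ T, x i) * ∏ i ∈ univ.erase j \ T, (1 - x i)`, which sum to `1`. So `V` is `Λ`-Lipschitz
in each coordinate on the cube, and moving from `x` to `y` one coordinate at a time gives the
`ℓ¹` bound.
-/

/-- The multilinear extension of a set function `v` on subsets of `Fin m`:
`V(x) = Σ_{T ⊆ [m]} (∏_{j ∈ T} x_j)(∏_{j ∉ T} (1 - x_j)) v(T)`. -/
noncomputable def mle (m : ℕ) (v : Finset (Fin m) → ℝ) (x : Fin m → ℝ) : ℝ :=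
  ∑ T : Finset (Fin m), (∏ j ∈ T, x j) * (∏ j ∈ Tᶜ, (1 - x j)) * v T

open Finset Function

theorem sum_powerset_prod_mul_prod_sdiff_one_sub {ι : Type*} [DecidableEq ι] (s : Finset ι)
    (x : ι → ℝ) : ∑ T ∈ s.powerset, (∏ i ∈ T, x i) * ∏ i ∈ s \ T, (1 - x i) = 1 := by
  simp [← prod_add]

theorem abs_sum_powerset_prod_mul_prod_sdiff_mul_le {ι : Type*} [DecidableEq ι] (s : Finset ι)
    {x : ι → ℝ} (hx : ∀ i ∈ s, x i ∈ Set.Icc (0 : ℝ) 1) {u : Finset ι → ℝ} {C : ℝ}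
    (hu : ∀ T ⊆ s, |u T| ≤ C) :
    |∑ T ∈ s.powerset, (∏ i ∈ T, x i) * (∏ i ∈ s \ T, (1 - x i)) * u T| ≤ C := by
  have hw : ∀ T ⊆ s, 0 ≤ (∏ i ∈ T, x i) * ∏ i ∈ s \ T, (1 - x i) := fun T hT =>
    mul_nonneg (prod_nonneg fun i hi => (hx i (hT hi)).1)
      (prod_nonneg fun i hi => sub_nonneg.2 (hx i (mem_sdiff.1 hi).1).2)
  calc _ ≤ ∑ T ∈ s.powerset, |(∏ i ∈ T, x i) * (∏ i ∈ s \ T, (1 - x i)) * u T| :=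
        abs_sum_le_sum_abs _ _
    _ ≤ ∑ T ∈ s.powerset, (∏ i ∈ T, x i) * (∏ i ∈ s \ T, (1 - x i)) * C := by
        refine sum_le_sum fun T hT => ?_
        rw [mem_powerset] at hT
        rw [abs_mul, abs_of_nonneg (hw T hT)]
        exact mul_le_mul_of_nonneg_left (hu T hT) (hw T hT)
    _ = C := by rw [← sum_mul, sum_powerset_prod_mul_prod_sdiff_one_sub, one_mul]

variable {m : ℕ} (v : Finset (Fin m) → ℝ)

theorem mle_eq_sum_powerset_erase (x : Fin m → ℝ) (j : Fin m) :
    mle m v x = ∑ T ∈ (univ.erase j).powerset,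
      (∏ i ∈ T, x i) * (∏ i ∈ univ.erase j \ T, (1 - x i)) *
        ((1 - x j) * v T + x j * v (insert j T)) := by
  rw [mle, ← powerset_univ, ← insert_erase (mem_univ j), sum_powerset_insert (notMem_erase j _),
    ← sum_add_distrib, insert_erase (mem_univ j)]
  refine sum_congr rfl fun T hT => ?_
  have hjT : j ∉ T := fun h => notMem_erase j _ (mem_powerset.1 hT h)
  have hcompl : Tᶜ = insert j (univ.erase j \ T) := by
    ext i; by_cases i = j <;> simp_all
  have hcompl_insert : (insert j T)ᶜ = univ.erase j \ T := by
    ext i; by_cases i = j <;> simp_all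
  rw [hcompl, hcompl_insert, prod_insert hjT, prod_insert (by simp)]
  ring

theorem mle_update_sub_mle_update (x : Fin m → ℝ) (j : Fin m) (a b : ℝ) :
    mle m v (update x j a) - mle m v (update x j b) = (a - b) *
      ∑ T ∈ (univ.erase j).powerset, (∏ i ∈ T, x i) * (∏ i ∈ univ.erase j \ T, (1 - x i))
        * (v (insert j T) - v T) := by
  rw [mle_eq_sum_powerset_erase v _ j, mle_eq_sum_powerset_erase v _ j, ← sum_sub_distrib, mul_sum]
  refine sum_congr rfl fun T hT => ?_
  have hjT : j ∉ T := fun h => notMem_erase j _ (mem_powerset.1 hT h)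
  have hjc : j ∉ univ.erase j \ T := fun h => notMem_erase j _ (mem_sdiff.1 h).1
  have hrest (c : ℝ) :
      ∏ i ∈ univ.erase j \ T, (1 - update x j c i) = ∏ i ∈ univ.erase j \ T, (1 - x i) :=
    prod_congr rfl fun i hi => by rw [update_of_ne (ne_of_mem_of_not_mem hi hjc)]
  simp only [update_self, prod_update_of_notMem hjT, hrest]
  ring

variable {v} {Λ : ℝ}

theorem abs_mle_update_sub_mle_update_le
    (hmarg : ∀ (S : Finset (Fin m)) (g : Fin m), |v (insert g S) - v S| ≤ Λ)
    {x : Fin m → ℝ} (hx : ∀ i, x i ∈ Set.Icc (0 : ℝ) 1)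
    (j : Fin m) (a b : ℝ) :
    |mle m v (update x j a) - mle m v (update x j b)| ≤ Λ * |a - b| := by
  rw [mle_update_sub_mle_update, abs_mul, mul_comm]
  exact mul_le_mul_of_nonneg_right
    (abs_sum_powerset_prod_mul_prod_sdiff_mul_le _ (fun i _ => hx i) fun T _ => hmarg T j)
    (abs_nonneg _)

theorem abs_mle_piecewise_sub_mle_le
    (hmarg : ∀ (S : Finset (Fin m)) (g : Fin m), |v (insert g S) - v S| ≤ Λ)
    {x y : Fin m → ℝ} (hx : ∀ i, x i ∈ Set.Icc (0 : ℝ) 1)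
    (hy : ∀ i, y i ∈ Set.Icc (0 : ℝ) 1) (s : Finset (Fin m)) :
    |mle m v (s.piecewise y x) - mle m v x| ≤ Λ * ∑ j ∈ s, |y j - x j| := by
  induction s using Finset.induction_on with
  | empty => simp
  | insert j s hj ih =>
    have hpx : ∀ i, s.piecewise y x i ∈ Set.Icc (0 : ℝ) 1 := fun i => by
      by_cases i ∈ s <;> simp [*]
    have hstep := abs_mle_update_sub_mle_update_le hmarg hpx j (y j) (s.piecewise y x j)
    rw [update_eq_self, piecewise_eq_of_notMem _ _ _ hj] at hstep
    rw [piecewise_insert, sum_insert hj, mul_add]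
    exact (abs_sub_le _ _ _).trans (add_le_add hstep ih)

theorem stmt_6_general (m : ℕ) (Λ : ℝ)
    (v : Finset (Fin m) → ℝ)
    (hmarg : ∀ (S : Finset (Fin m)) (g : Fin m), |v (insert g S) - v S| ≤ Λ)
    (x y : Fin m → ℝ)
    (hx : ∀ j, x j ∈ Set.Icc (0 : ℝ) 1) (hy : ∀ j, y j ∈ Set.Icc (0 : ℝ) 1) :
    |mle m v y - mle m v x| ≤ Λ * ∑ j, |y j - x j| := by
  simpa only [piecewise_univ] using abs_mle_piecewise_sub_mle_le hmarg hx hy univ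

/-- **The multilinear extension is `Λ`-Lipschitz in the ℓ1 norm on `[0,1]^m`**
whenever the underlying set function `v` has marginal values at most `Λ`. -/
theorem stmt_6 (m : ℕ) (hm : 1 ≤ m) (Λ : ℝ) (hΛ : 0 < Λ)
    (v : Finset (Fin m) → ℝ)
    (hmarg : ∀ (S : Finset (Fin m)) (g : Fin m), |v (insert g S) - v S| ≤ Λ)
    (x y : Fin m → ℝ)
    (hx : ∀ j, x j ∈ Set.Icc (0 : ℝ) 1) (hy : ∀ j, y j ∈ Set.Icc (0 : ℝ) 1) :
    |mle m v y - mle m v x| ≤ Λ * ∑ j, |y j - x j| :=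
  stmt_6_general m Λ v hmarg x y hx hy
end

section
/- Let m ≥ 2, Λ ≥ 1, and n ≥ 1 with 5n ≤ m. For each i ∈ {1, …, n}, let f_i : ℝ → ℝ → ℝ be a cake valuation that is nonnegative, normalized (f_i x x = 0), and (mΛ)-Lipschitz, and define f̂_i ℓ r = f_i ℓ r + β(r − ℓ) with β(x) = min(mΛx, 4Λ + 1). Let 0 = e_0 ≤ e_1 ≤ … ≤ e_n = 1 be a contiguous division such that |f̂_i e_{i-1} e_i − f̂_j e_{j-1} e_j| ≤ 1/(8mΛ) for all i, j ∈ {1, …, n}. Then for every i ∈ {1, …, n}, the interval length satisfies e_i − e_{i-1} ≥ 2/m + 1/(2Λm²). -/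
/-!
Splitting `[0,1]` into `n ≤ m/5` pieces, some piece has length at least `1/n ≥ 5/m`, so its
padding is saturated and its padded value is at least `4Λ + 1`. On the other hand a normalized
`mΛ`-Lipschitz valuation is at most `mΛ` times the length, so every padded value is at most
`2mΛ` times the length. Equitability up to `1/(8mΛ)` then forces every piece to be long.
-/

open Finset

def IsLipschitzValuation (γ : ℝ) (f : ℝ → ℝ → ℝ) : Prop :=
  ∀ ℓ r ℓ' r' : ℝ, 0 ≤ ℓ → ℓ ≤ r → r ≤ 1 → 0 ≤ ℓ' → ℓ' ≤ r' → r' ≤ 1 →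
    |f ℓ r - f ℓ' r'| ≤ γ * (|ℓ - ℓ'| + |r - r'|)

lemma exists_div_le_sub_succ (e : ℕ → ℝ) {n : ℕ} (hn : 0 < n) :
    ∃ j < n, (e n - e 0) / n ≤ e (j + 1) - e j := by
  have hsum : ∑ _k ∈ range n, (e n - e 0) / n ≤ ∑ k ∈ range n, (e (k + 1) - e k) := by
    rw [sum_range_sub, sum_const, card_range, nsmul_eq_mul, mul_div_cancel₀]
    exact_mod_cast hn.ne'
  obtain ⟨j, hj, hle⟩ := exists_le_of_sum_le (nonempty_range_iff.mpr hn.ne') hsum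
  exact ⟨j, mem_range.mp hj, hle⟩

lemma mem_Icc_of_le_succ {e : ℕ → ℝ} {n : ℕ} (hmono : ∀ i < n, e i ≤ e (i + 1))
    {k : ℕ} (hk : k ≤ n) : e k ∈ Set.Icc (e 0) (e n) := by
  have hmon : MonotoneOn e (Set.Iic n) :=
    monotoneOn_of_le_succ Set.ordConnected_Iic fun a _ _ ha ↦ by
      rw [Order.succ_eq_add_one] at ha ⊢
      exact hmono a (Nat.lt_of_succ_le ha)
  exact ⟨hmon (Set.mem_Iic.mpr (Nat.zero_le n)) hk (Nat.zero_le k),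
    hmon hk Set.self_mem_Iic hk⟩

section PaddedValuation

variable {f : ℝ → ℝ → ℝ} {γ c ℓ r : ℝ}

lemma IsLipschitzValuation.le_mul_length (hlip : IsLipschitzValuation γ f)
    (hnorm : f ℓ ℓ = 0) (hℓ : 0 ≤ ℓ) (hℓr : ℓ ≤ r) (hr : r ≤ 1) : f ℓ r ≤ γ * (r - ℓ) := by
  have h := hlip ℓ r ℓ ℓ hℓ hℓr hr hℓ le_rfl (hℓr.trans hr)
  rw [hnorm, sub_zero, sub_self, abs_zero, zero_add, abs_of_nonneg (sub_nonneg.mpr hℓr)] at h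
  exact (le_abs_self _).trans h

lemma IsLipschitzValuation.add_min_le (hlip : IsLipschitzValuation γ f)
    (hnorm : f ℓ ℓ = 0) (hℓ : 0 ≤ ℓ) (hℓr : ℓ ≤ r) (hr : r ≤ 1) :
    f ℓ r + min (γ * (r - ℓ)) c ≤ 2 * γ * (r - ℓ) := by
  linarith [hlip.le_mul_length hnorm hℓ hℓr hr, min_le_left (γ * (r - ℓ)) c]

lemma le_add_min_of_le (hf : 0 ≤ f ℓ r) (hc : c ≤ γ * (r - ℓ)) :
    c ≤ f ℓ r + min (γ * (r - ℓ)) c := by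
  rw [min_eq_right hc]
  linarith

end PaddedValuation

lemma two_div_add_le_of_two_mul_mul_ge {m Λ d : ℝ} (hm : 2 ≤ m) (hΛ : 1 ≤ Λ)
    (h : 4 * Λ + 1 - 1 / (8 * m * Λ) ≤ 2 * m * Λ * d) :
    2 / m + 1 / (2 * Λ * m ^ 2) ≤ d := by
  have hinv_m : 1 / m ≤ 1 / 2 := one_div_le_one_div_of_le (by norm_num) hm
  have hinv_mΛ : 1 / (8 * m * Λ) ≤ 1 / 16 :=
    one_div_le_one_div_of_le (by norm_num) (by nlinarith)
  rw [show 2 / m + 1 / (2 * Λ * m ^ 2) = (4 * Λ + 1 / m) / (2 * m * Λ) by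
    field_simp; ring, div_le_iff₀ (by positivity)]
  linarith

theorem stmt_10_general (m n : ℕ) (hnm : 5 * n ≤ m)
    (Λ : ℝ) (hΛ : 1 ≤ Λ) (f : Fin n → ℝ → ℝ → ℝ)
    (hnonneg : ∀ i, ∀ ℓ r : ℝ, 0 ≤ ℓ → ℓ ≤ r → r ≤ 1 → 0 ≤ f i ℓ r)
    (hnorm : ∀ i, ∀ x ∈ Set.Icc (0 : ℝ) 1, f i x x = 0)
    (hlip : ∀ i, ∀ ℓ r ℓ' r' : ℝ, 0 ≤ ℓ → ℓ ≤ r → r ≤ 1 →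
      0 ≤ ℓ' → ℓ' ≤ r' → r' ≤ 1 →
      |f i ℓ r - f i ℓ' r'| ≤ (m : ℝ) * Λ * (|ℓ - ℓ'| + |r - r'|))
    (fhat : Fin n → ℝ → ℝ → ℝ)
    (hfhat : ∀ i, ∀ ℓ r : ℝ,
      fhat i ℓ r = f i ℓ r + min ((m : ℝ) * Λ * (r - ℓ)) (4 * Λ + 1))
    (e : ℕ → ℝ) (he0 : e 0 = 0) (hen : e n = 1)
    (hmono : ∀ i < n, e i ≤ e (i + 1))
    (heq : ∀ i j : Fin n,
      |fhat i (e i.val) (e (i.val + 1)) - fhat j (e j.val) (e (j.val + 1))|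
        ≤ 1 / (8 * m * Λ)) :
    ∀ i : Fin n,
      2 / (m : ℝ) + 1 / (2 * Λ * (m : ℝ) ^ 2) ≤ e (i.val + 1) - e i.val := by
  intro i
  have hn : 0 < n := i.pos
  have hm : (5 : ℝ) * n ≤ m := by exact_mod_cast hnm
  have hIcc : ∀ k ≤ n, e k ∈ Set.Icc (0 : ℝ) 1 := fun k hk ↦ by
    simpa only [he0, hen] using mem_Icc_of_le_succ hmono hk
  obtain ⟨j, hj, hlong⟩ := exists_div_le_sub_succ e hn
  rw [he0, hen, sub_zero] at hlong
  have hbig : 4 * Λ + 1 ≤ fhat ⟨j, hj⟩ (e j) (e (j + 1)) := by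
    rw [hfhat]
    refine le_add_min_of_le (hnonneg _ _ _ (hIcc j hj.le).1 (hmono j hj) (hIcc (j + 1) hj).2) ?_
    calc 4 * Λ + 1 ≤ m * Λ * (1 / n) := by
          rw [mul_one_div, le_div_iff₀ (by exact_mod_cast hn)]
          nlinarith
      _ ≤ m * Λ * (e (j + 1) - e j) := by gcongr
  have hsmall : fhat i (e i) (e (i + 1)) ≤ 2 * m * Λ * (e (i + 1) - e i) := by
    rw [hfhat, mul_assoc 2 (m : ℝ) Λ]
    exact IsLipschitzValuation.add_min_le (hlip i) (hnorm i _ (hIcc i i.isLt.le)) (hIcc i i.isLt.le).1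
      (hmono i i.isLt) (hIcc (i + 1) i.isLt).2
  have hclose := (abs_sub_le_iff.mp (heq i ⟨j, hj⟩)).2
  refine two_div_add_le_of_two_mul_mul_ge (by exact_mod_cast (by omega : 2 ≤ m)) hΛ ?_
  linarith

/-- **Length lower bound for approximately equitable divisions of the padded
valuations.** If `m ≥ 2`, `Λ ≥ 1`, `5n ≤ m`, each `f i` is nonnegative,
normalized and `(mΛ)`-Lipschitz, `f̂ i ℓ r = f i ℓ r + min(mΛ(r-ℓ), 4Λ+1)`,
and the contiguous division `0 = e 0 ≤ ⋯ ≤ e n = 1` is equitable for the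
`f̂ i` within `1/(8mΛ)`, then every interval has length at least
`2/m + 1/(2Λm²)`. -/
theorem stmt_10 (m n : ℕ) (hm : 2 ≤ m) (hn : 1 ≤ n) (hnm : 5 * n ≤ m)
    (Λ : ℝ) (hΛ : 1 ≤ Λ) (f : Fin n → ℝ → ℝ → ℝ)
    (hnonneg : ∀ i, ∀ ℓ r : ℝ, 0 ≤ ℓ → ℓ ≤ r → r ≤ 1 → 0 ≤ f i ℓ r)
    (hnorm : ∀ i, ∀ x ∈ Set.Icc (0 : ℝ) 1, f i x x = 0)
    (hlip : ∀ i, ∀ ℓ r ℓ' r' : ℝ, 0 ≤ ℓ → ℓ ≤ r → r ≤ 1 →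
      0 ≤ ℓ' → ℓ' ≤ r' → r' ≤ 1 →
      |f i ℓ r - f i ℓ' r'| ≤ (m : ℝ) * Λ * (|ℓ - ℓ'| + |r - r'|))
    (fhat : Fin n → ℝ → ℝ → ℝ)
    (hfhat : ∀ i, ∀ ℓ r : ℝ,
      fhat i ℓ r = f i ℓ r + min ((m : ℝ) * Λ * (r - ℓ)) (4 * Λ + 1))
    (e : ℕ → ℝ) (he0 : e 0 = 0) (hen : e n = 1)
    (hmono : ∀ i < n, e i ≤ e (i + 1))
    (heq : ∀ i j : Fin n,
      |fhat i (e i.val) (e (i.val + 1)) - fhat j (e j.val) (e (j.val + 1))|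
        ≤ 1 / (8 * m * Λ)) :
    ∀ i : Fin n,
      2 / (m : ℝ) + 1 / (2 * Λ * (m : ℝ) ^ 2) ≤ e (i.val + 1) - e i.val :=
  stmt_10_general m n hnm Λ hΛ f hnonneg hnorm hlip fhat hfhat e he0 hen hmono heq
end
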